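/- Conflict generalisation for liveness properties (corrected sub-MC construction of Section 3): let 𝔓 be a family of MCs over finite state type S with parameter type K and initial state s0, let G ⊆ S, λ ∈ ℝ, let r : K → S be a realisation, let B = B_{P_r}(G) be the set of states with no path to G under P_r, and let C ⊆ S with s0 ∈ C. Suppose the (C ∪ B)-restriction of P_r satisfies AProb_{(P_r)_{C∪B}}(s0, B, G) ≥ 1 − λ. Then every realisation r' : K → S with r' k = r k for every parameter k that occurs at some state of C ∪ B satisfies Prob_{P_{r'}}(s0, G) ≤ λ, i.e., D_{r'} violates the liveness property P_{>λ}(◇G). -/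

import Mathlib

open scoped Classical BigOperators

/-- `n`-step reachability probability `Pr_P^n(s, G)`. -/
noncomputable def Pr {S : Type*} [Fintype S] (P : S → S → ℝ) : ℕ → S → Set S → ℝ
  | 0, s, G => if s ∈ G then 1 else 0
  | n + 1, s, G => if s ∈ G then 1 else ∑ t, P s t * Pr P n t G

/-- Reachability probability `Prob_P(s, G) = ⨆ n, Pr_P^n(s, G)`. -/
noncomputable def Prob {S : Type*} [Fintype S] (P : S → S → ℝ) (s : S) (G : Set S) : ℝ :=
  ⨆ n : ℕ, Pr P n s G

/-- `C`-restriction of `P`: states outside `C` are made absorbing. -/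
noncomputable def restrictMC {S : Type*} (C : Set S) (P : S → S → ℝ) (s t : S) : ℝ :=
  if s ∈ C then P s t else (if t = s then 1 else 0)

/-- `n`-step probability of reaching `B` while avoiding `G`. -/
noncomputable def APr {S : Type*} [Fintype S] (P : S → S → ℝ) : ℕ → S → Set S → Set S → ℝ
  | 0, s, B, _ => if s ∈ B then 1 else 0
  | n + 1, s, B, G => if s ∈ B then 1 else if s ∈ G then 0 else ∑ t, P s t * APr P n t B G

/-- `AProb_P(s, B, G) = ⨆ n, APr_P^n(s, B, G)`. -/
noncomputable def AProb {S : Type*} [Fintype S] (P : S → S → ℝ) (s : S) (B G : Set S) : ℝ :=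
  ⨆ n : ℕ, APr P n s B G

/-- `s` has a path to `G` under `P`. -/
def HasPathTo {S : Type*} (P : S → S → ℝ) (s : S) (G : Set S) : Prop :=
  ∃ (m : ℕ) (u : ℕ → S), u 0 = s ∧ (∀ i < m, 0 < P (u i) (u (i + 1))) ∧ u m ∈ G

/-- `B_P(G)`: the set of states with no path to `G` under `P`. -/
def BSet {S : Type*} (P : S → S → ℝ) (G : Set S) : Set S :=
  {s | ¬ HasPathTo P s G}

/-- Transition function `P_r` of the instantiated MC `D_r` of a family `𝔓`. -/
noncomputable def Pinst {S K : Type*} [Fintype K] (𝔓 : S → K → ℝ) (r : K → S) (s t : S) : ℝ :=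
  ∑ k, if r k = t then 𝔓 s k else 0

/-- Parameter `k` occurs at some state of `C`. -/
def OccursIn {S K : Type*} (𝔓 : S → K → ℝ) (C : Set S) (k : K) : Prop :=
  ∃ s ∈ C, 0 < 𝔓 s k

/-- `u` is reachable from `s0` under `P`. -/
def ReachableFrom {S : Type*} (P : S → S → ℝ) (s0 u : S) : Prop :=
  ∃ (m : ℕ) (v : ℕ → S), v 0 = s0 ∧ (∀ i < m, 0 < P (v i) (v (i + 1))) ∧ v m = u

/-!
Let `P'` be the chain of `r'`. It has the same rows as `P_r` on `C ∪ B`, so both chains have the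
same `(C ∪ B)`-restriction, and `B`, being closed under `P_r`, is closed under `P'`; hence `G` is
unreachable from `B` under `P'`. Reaching `G` under `P'` and reaching `B` before `G` in the
restriction are then disjoint events: by induction on `n`,
`Pr_{P'}^n(s, G) + APr^n(s, B, G) ≤ 1` for every state `s`, and taking suprema gives
`Prob_{P'}(s0, G) ≤ 1 - AProb(s0, B, G) ≤ λ`.
-/

lemma ciSup_add_ciSup_le_of_monotone {ι : Type*} [SemilatticeSup ι] [Nonempty ι]
    {a b : ι → ℝ} {c : ℝ} (ha : Monotone a) (hb : Monotone b) (h : ∀ i, a i + b i ≤ c) :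
    (⨆ i, a i) + (⨆ i, b i) ≤ c := by
  have hb_le : ∀ i, ⨆ j, b j ≤ c - a i := fun i => ciSup_le fun j => by
    linarith [h (i ⊔ j), ha (le_sup_left (a := i) (b := j)), hb (le_sup_right (a := i) (b := j))]
  have ha_le : ∀ i, a i ≤ c - ⨆ j, b j := fun i => by linarith [hb_le i]
  linarith [ciSup_le ha_le]

section MarkovChain

variable {S : Type*} {P : S → S → ℝ}

lemma restrictMC_nonneg (hP : ∀ s t, 0 ≤ P s t) (D : Set S) (s t : S) :
    0 ≤ restrictMC D P s t := by
  unfold restrictMC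
  split_ifs
  exacts [hP s t, zero_le_one, le_rfl]

lemma restrictMC_congr {P' : S → S → ℝ} {D : Set S} (h : ∀ s ∈ D, ∀ t, P s t = P' s t) :
    restrictMC D P = restrictMC D P' := by
  ext s t
  by_cases hs : s ∈ D <;> simp [restrictMC, hs, h s]

lemma mem_BSet_of_pos {G : Set S} {s t : S} (hs : s ∈ BSet P G) (hst : 0 < P s t) :
    t ∈ BSet P G := by
  rintro ⟨m, u, hu0, hstep, hm⟩
  refine hs ⟨m + 1, fun | 0 => s | i + 1 => u i, rfl, ?_, hm⟩
  rintro (_ | i) hi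
  · simpa [hu0] using hst
  · exact hstep i (Nat.lt_of_succ_lt_succ hi)

lemma not_mem_of_mem_BSet {G : Set S} {s : S} (hs : s ∈ BSet P G) : s ∉ G :=
  fun hsG => hs ⟨0, fun _ => s, rfl, fun _ hi => absurd hi (Nat.not_lt_zero _), hsG⟩

variable [Fintype S]

lemma Pr_eq_APr_empty (n : ℕ) (s : S) (G : Set S) :
    Pr P n s G = APr P n s G ∅ := by
  induction n generalizing s with
  | zero => rfl
  | succ n ih => simp only [Pr, APr, ih, Set.mem_empty_iff_false, if_false]

lemma APr_nonneg (hP : ∀ s t, 0 ≤ P s t) (n : ℕ) (s : S) (B G : Set S) :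
    0 ≤ APr P n s B G := by
  induction n generalizing s with
  | zero => unfold APr; positivity
  | succ n ih =>
    unfold APr
    split_ifs
    exacts [zero_le_one, le_rfl, Finset.sum_nonneg fun t _ => mul_nonneg (hP s t) (ih t)]

lemma APr_monotone (hP : ∀ s t, 0 ≤ P s t) (s : S) (B G : Set S) :
    Monotone fun n => APr P n s B G := by
  refine monotone_nat_of_le_succ fun n => ?_
  induction n generalizing s with
  | zero =>
    show APr P 0 s B G ≤ APr P 1 s B G
    rw [APr, APr]
    split_ifs
    exacts [le_rfl, le_rfl, Finset.sum_nonneg fun t _ => mul_nonneg (hP s t) (APr_nonneg hP 0 t B G)]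
  | succ n ih =>
    rw [APr, APr]
    split_ifs
    exacts [le_rfl, le_rfl, Finset.sum_le_sum fun t _ => mul_le_mul_of_nonneg_left (ih t) (hP s t)]

lemma Pr_monotone (hP : ∀ s t, 0 ≤ P s t) (s : S) (G : Set S) :
    Monotone fun n => Pr P n s G := by
  simpa only [Pr_eq_APr_empty] using APr_monotone hP s G ∅

lemma Pr_le_one (hP0 : ∀ s t, 0 ≤ P s t) (hP1 : ∀ s, ∑ t, P s t = 1)
    (n : ℕ) (s : S) (G : Set S) : Pr P n s G ≤ 1 := by
  induction n generalizing s with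
  | zero => unfold Pr; split_ifs <;> norm_num
  | succ n ih =>
    unfold Pr
    split_ifs
    · exact le_rfl
    · calc ∑ t, P s t * Pr P n t G ≤ ∑ t, P s t :=
            Finset.sum_le_sum fun t _ => mul_le_of_le_one_right (hP0 s t) (ih t)
        _ = 1 := hP1 s

lemma Pr_eq_zero_of_closed {B G : Set S} (hBG : ∀ s ∈ B, s ∉ G)
    (hclosed : ∀ s ∈ B, ∀ t, P s t ≠ 0 → t ∈ B) (n : ℕ) : ∀ s ∈ B, Pr P n s G = 0 := by
  induction n with
  | zero => intro s hs; simp [Pr, hBG s hs]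
  | succ n ih =>
    intro s hs
    rw [Pr, if_neg (hBG s hs)]
    refine Finset.sum_eq_zero fun t _ => ?_
    by_cases hst : P s t = 0
    · rw [hst, zero_mul]
    · rw [ih t (hclosed s hs t hst), mul_zero]

lemma APr_restrictMC_eq_zero {B D : Set S} (hBD : B ⊆ D) (G : Set S) (n : ℕ) {s : S}
    (hs : s ∉ D) : APr (restrictMC D P) n s B G = 0 := by
  have hsB : s ∉ B := fun h => hs (hBD h)
  induction n with
  | zero => simp [APr, hsB]
  | succ n ih =>
    rw [APr, if_neg hsB]
    split_ifs
    · rfl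
    · simp [restrictMC, hs, ih]

lemma Pr_add_APr_restrictMC_le_one (hP0 : ∀ s t, 0 ≤ P s t) (hP1 : ∀ s, ∑ t, P s t = 1)
    {B D G : Set S} (hBD : B ⊆ D) (hB : ∀ n, ∀ s ∈ B, Pr P n s G = 0) (n : ℕ) (s : S) :
    Pr P n s G + APr (restrictMC D P) n s B G ≤ 1 := by
  have hBG : ∀ s ∈ B, s ∉ G := fun s hs hsG => by simpa [Pr, hsG] using hB 0 s hs
  induction n generalizing s with
  | zero =>
    by_cases hsB : s ∈ B
    · simp [Pr, APr, hsB, hBG s hsB]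
    · by_cases hsG : s ∈ G <;> simp [Pr, APr, hsB, hsG]
  | succ n ih =>
    by_cases hsB : s ∈ B
    · simp [hB (n + 1) s hsB, APr, hsB]
    by_cases hsG : s ∈ G
    · simp [Pr, APr, hsG, hsB]
    by_cases hsD : s ∉ D
    · rw [APr_restrictMC_eq_zero hBD G _ hsD, add_zero]
      exact Pr_le_one hP0 hP1 _ s G
    rw [not_not] at hsD
    simp only [Pr, APr, if_neg hsG, if_neg hsB, restrictMC, if_pos hsD]
    calc ∑ t, P s t * Pr P n t G + ∑ t, P s t * APr (restrictMC D P) n t B G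
        = ∑ t, P s t * (Pr P n t G + APr (restrictMC D P) n t B G) := by
          rw [← Finset.sum_add_distrib]; simp only [mul_add]
      _ ≤ ∑ t, P s t := Finset.sum_le_sum fun t _ => mul_le_of_le_one_right (hP0 s t) (ih t)
      _ = 1 := hP1 s

lemma Prob_add_AProb_restrictMC_le_one (hP0 : ∀ s t, 0 ≤ P s t) (hP1 : ∀ s, ∑ t, P s t = 1)
    {B D G : Set S} (hBD : B ⊆ D) (hB : ∀ n, ∀ s ∈ B, Pr P n s G = 0) (s : S) :
    Prob P s G + AProb (restrictMC D P) s B G ≤ 1 :=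
  ciSup_add_ciSup_le_of_monotone (Pr_monotone hP0 s G)
    (APr_monotone (restrictMC_nonneg hP0 D) s B G)
    (fun n => Pr_add_APr_restrictMC_le_one hP0 hP1 hBD hB n s)

end MarkovChain

section Family

variable {S K : Type*} [Fintype K] {𝔓 : S → K → ℝ}

lemma Pinst_nonneg (h𝔓0 : ∀ s k, 0 ≤ 𝔓 s k) (r : K → S) (s t : S) : 0 ≤ Pinst 𝔓 r s t :=
  Finset.sum_nonneg fun k _ => by split_ifs; exacts [h𝔓0 s k, le_rfl]

lemma sum_Pinst [Fintype S] (h𝔓1 : ∀ s, ∑ k, 𝔓 s k = 1) (r : K → S) (s : S) :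
    ∑ t, Pinst 𝔓 r s t = 1 := by
  unfold Pinst
  rw [Finset.sum_comm]
  simp [h𝔓1 s]

lemma Pinst_eq_of_occursIn (h𝔓0 : ∀ s k, 0 ≤ 𝔓 s k) {D : Set S} {r r' : K → S}
    (hr : ∀ k, OccursIn 𝔓 D k → r' k = r k) {s : S} (hs : s ∈ D) (t : S) :
    Pinst 𝔓 r' s t = Pinst 𝔓 r s t := by
  refine Finset.sum_congr rfl fun k _ => ?_
  rcases (h𝔓0 s k).lt_or_eq with hpos | hzero
  · rw [hr k ⟨s, hs, hpos⟩]
  · simp [← hzero]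

end Family

theorem stmt_16_general {S K : Type*} [Fintype S] [Fintype K]
    (𝔓 : S → K → ℝ) (h𝔓0 : ∀ s k, 0 ≤ 𝔓 s k) (h𝔓1 : ∀ s, ∑ k, 𝔓 s k = 1)
    (s0 : S) (G : Set S) (lam : ℝ) (r : K → S)
    (B : Set S) (hB : B = BSet (Pinst 𝔓 r) G)
    (C : Set S)
    (hcrit : AProb (restrictMC (C ∪ B) (Pinst 𝔓 r)) s0 B G ≥ 1 - lam) :
    ∀ r' : K → S, (∀ k, OccursIn 𝔓 (C ∪ B) k → r' k = r k) →
      Prob (Pinst 𝔓 r') s0 G ≤ lam := by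
  intro r' hr'
  have hagree : ∀ s ∈ C ∪ B, ∀ t, Pinst 𝔓 r s t = Pinst 𝔓 r' s t :=
    fun s hs t => (Pinst_eq_of_occursIn h𝔓0 hr' hs t).symm
  have hBG : ∀ s ∈ B, s ∉ G := fun s hs => not_mem_of_mem_BSet (hB ▸ hs)
  have hclosed : ∀ s ∈ B, ∀ t, Pinst 𝔓 r' s t ≠ 0 → t ∈ B := by
    intro s hs t hst
    rw [← hagree s (Or.inr hs)] at hst
    subst hB
    exact mem_BSet_of_pos hs ((Pinst_nonneg h𝔓0 r s t).lt_of_ne' hst)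
  rw [restrictMC_congr hagree] at hcrit
  have := Prob_add_AProb_restrictMC_le_one (Pinst_nonneg h𝔓0 r') (sum_Pinst h𝔓1 r')
    (Set.subset_union_right (s := C)) (fun n => Pr_eq_zero_of_closed hBG hclosed n) s0
  linarith

/-- conflict generalisation for liveness properties
(corrected sub-MC construction). -/
theorem stmt_16 {S K : Type*} [Fintype S] [Nonempty S] [Fintype K]
    (𝔓 : S → K → ℝ) (h𝔓0 : ∀ s k, 0 ≤ 𝔓 s k) (h𝔓1 : ∀ s, ∑ k, 𝔓 s k = 1)
    (s0 : S) (G : Set S) (lam : ℝ) (r : K → S)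
    (B : Set S) (hB : B = BSet (Pinst 𝔓 r) G)
    (C : Set S) (hs0 : s0 ∈ C)
    (hcrit : AProb (restrictMC (C ∪ B) (Pinst 𝔓 r)) s0 B G ≥ 1 - lam) :
    ∀ r' : K → S, (∀ k, OccursIn 𝔓 (C ∪ B) k → r' k = r k) →
      Prob (Pinst 𝔓 r') s0 G ≤ lam :=
  stmt_16_general 𝔓 h𝔓0 h𝔓1 s0 G lam r B hB C hcrit
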